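/- Let m ≥ 1 and l be integers, let a, b be positive integers, and let r_{−1}, r_0, …, r_ν and k_1, …, k_ν be the data of the Euclidean algorithm: r_{−1} = b, r_0 = a, r_{i−2} = k_i·r_{i−1} + r_i with 0 ≤ r_i < r_{i−1} for 1 ≤ i ≤ ν, and r_ν = 0. Then for every z ∈ ℤ/mℤ: Π_{i=1}^{ν} ( Π_{j=1}^{k_i} ω_l( r_{i−1}·z, (r_{i−2} − j·r_{i−1})·z, r_{i−1}·z ) )^{(−1)^{i−1}} = ζ_{m²}^{l·z̃·( b·(ã·z) − a·(b̃·z) )}, where (ã·z) and (b̃·z) denote the canonical representatives in {0,…,m−1} of a·z and b·z in ℤ/mℤ, and n·z means the action of the integer n on z ∈ ℤ/mℤ. -/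

import Mathlib

/-!
Since `m ⌊(ỹ + z̃)/m⌋ = ỹ + z̃ - (y + z)~` and `ζ_m = ζ_{m²}^m`, every value of `ω_l` is a power
of `ζ_{m²}`, and the product over `j` telescopes: with `v_i` the representative of `r_i z`, the
`i`-th factor is `ζ_{m²}^{l v_{i-1} (v_i - v_{i-2} + k_i v_{i-1})}`. Writing `v_i = r_i z̃ - m c_i`,
the Euclidean recurrence turns each such exponent, modulo `m²`, into a difference of consecutive
values of `(-1)^i l m z̃ (r_{i-1} c_i - r_i c_{i-1})`; as `r_ν = v_ν = 0`, the alternating sum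
collapses to `l z̃ (b v_0 - a v_{-1})`.
-/
/-- `ζ_n = exp(2πi/n)`. -/
noncomputable def zetaC (n : ℕ) : ℂ := Complex.exp (2 * Real.pi * Complex.I / n)

/-- The 3-cocycle `ω_l(x,y,z) = ζ_m^{l·x̃·⌊(ỹ+z̃)/m⌋}` on `ℤ/mℤ`. -/
noncomputable def omegaL (m : ℕ) (l : ℤ) (x y z : ZMod m) : ℂ :=
  zetaC m ^ (l * (x.val : ℤ) * (((y.val + z.val) / m : ℕ) : ℤ))

open Finset

theorem Finset.prod_zpow_eq_zpow_sum₀ {ι G₀ : Type*} [CommGroupWithZero G₀] {a : G₀} (ha : a ≠ 0)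
    (s : Finset ι) (f : ι → ℤ) : ∏ i ∈ s, a ^ f i = a ^ ∑ i ∈ s, f i := by
  classical
  induction s using Finset.induction_on with
  | empty => simp
  | insert i s hi ih => rw [prod_insert hi, sum_insert hi, zpow_add₀ ha, ih]

lemma isPrimitiveRoot_zetaC {n : ℕ} (hn : n ≠ 0) : IsPrimitiveRoot (zetaC n) n :=
  Complex.isPrimitiveRoot_exp n hn

lemma zetaC_ne_zero (n : ℕ) : zetaC n ≠ 0 := Complex.exp_ne_zero _

lemma zetaC_zpow_eq_zpow_of_modEq {n : ℕ} (hn : n ≠ 0) {e e' : ℤ} (h : e ≡ e' [ZMOD n]) :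
    zetaC n ^ e = zetaC n ^ e' := by
  have hdvd : zetaC n ^ (e - e') = 1 :=
    ((isPrimitiveRoot_zetaC hn).zpow_eq_one_iff_dvd _).mpr (Int.ModEq.dvd h.symm)
  rw [← sub_add_cancel e e', zpow_add₀ (zetaC_ne_zero n), hdvd, one_mul]

lemma zetaC_sq_pow_self (m : ℕ) (hm : m ≠ 0) : zetaC (m ^ 2) ^ m = zetaC m := by
  have : (m : ℂ) ≠ 0 := Nat.cast_ne_zero.mpr hm
  rw [zetaC, zetaC, ← Complex.exp_nat_mul]
  congr 1
  push_cast
  field_simp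

lemma ZMod.val_add_val_sub_val_add {m : ℕ} [NeZero m] (y z : ZMod m) :
    (y.val : ℤ) + z.val - (y + z).val = m * (((y.val + z.val) / m : ℕ) : ℤ) := by
  have := Nat.div_add_mod (y.val + z.val) m
  rw [ZMod.val_add]
  omega

lemma ZMod.val_zsmul_modEq {m : ℕ} [NeZero m] (r : ℤ) (z : ZMod m) :
    ((r • z).val : ℤ) ≡ r * z.val [ZMOD m] := by
  rw [← ZMod.intCast_eq_intCast_iff]
  simp [zsmul_eq_mul]

lemma omegaL_eq_zetaC_sq_zpow {m : ℕ} [NeZero m] (l : ℤ) (x y z : ZMod m) :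
    omegaL m l x y z = zetaC (m ^ 2) ^ (l * x.val * ((y.val : ℤ) + z.val - (y + z).val)) := by
  rw [omegaL, ← zetaC_sq_pow_self m (NeZero.ne m), ← zpow_natCast, ← zpow_mul,
    ZMod.val_add_val_sub_val_add]
  ring_nf

lemma prod_omegaL_sub_smul {m : ℕ} [NeZero m] (l : ℤ) (x y : ZMod m) (k : ℕ) :
    ∏ j ∈ range k, omegaL m l x (y - ((j : ℤ) + 1) • x) x
      = zetaC (m ^ 2) ^ (l * x.val * (((y - (k : ℤ) • x).val : ℤ) - y.val + k * x.val)) := by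
  have hstep : ∀ j : ℕ, y - ((j : ℤ) + 1) • x + x = y - (j : ℤ) • x := fun j => by
    rw [add_smul, one_smul]; abel
  simp only [omegaL_eq_zetaC_sq_zpow, hstep]
  rw [prod_zpow_eq_zpow_sum₀ (zetaC_ne_zero _), ← mul_sum]
  congr 2
  have htel := sum_range_sub (fun j : ℕ => ((y - (j : ℤ) • x).val : ℤ)) k
  simp only [Nat.cast_add, Nat.cast_one, Nat.cast_zero, zero_smul, sub_zero, sum_sub_distrib]
    at htel
  rw [sum_sub_distrib, sum_add_distrib, sum_const, card_range, nsmul_eq_mul]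
  linarith

lemma sum_alternating_modEq_sq {n Z l : ℤ} {ν : ℕ} {r v k : ℕ → ℤ}
    (hv : ∀ i, v i ≡ r i * Z [ZMOD n])
    (hrec : ∀ i < ν, r i = k (i + 1) * r (i + 1) + r (i + 2))
    (hrν : r (ν + 1) = 0) (hvν : v (ν + 1) = 0) :
    ∑ i ∈ range ν, l * v (i + 1) * (v (i + 2) - v i + k (i + 1) * v (i + 1)) * (-1) ^ i
      ≡ l * Z * (r 0 * v 1 - r 1 * v 0) [ZMOD n ^ 2] := by
  choose c hc using fun i => (hv i).dvd
  have hv' : ∀ i, v i = r i * Z - n * c i := fun i => by linarith [hc i]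
  have hcν : n * c (ν + 1) = 0 := by linear_combination -hc (ν + 1) + Z * hrν - hvν
  set B : ℕ → ℤ := fun i => (-1) ^ i * (r i * c (i + 1) - r (i + 1) * c i) with hB
  have hterm : ∀ i ∈ range ν,
      l * v (i + 1) * (v (i + 2) - v i + k (i + 1) * v (i + 1)) * (-1) ^ i
        ≡ l * n * Z * (B (i + 1) - B i) [ZMOD n ^ 2] := by
    intro i hi
    refine (Int.modEq_iff_add_fac.mpr
      ⟨l * c (i + 1) * (c (i + 2) - c i + k (i + 1) * c (i + 1)) * (-1) ^ i, ?_⟩).symm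
    simp only [hB, hv']
    rw [hrec i (mem_range.mp hi), pow_succ]
    ring
  calc _ ≡ ∑ i ∈ range ν, l * n * Z * (B (i + 1) - B i) [ZMOD n ^ 2] := Int.ModEq.sum hterm
    _ = l * n * Z * (B ν - B 0) := by rw [← mul_sum, sum_range_sub]
    _ = l * Z * (r 0 * v 1 - r 1 * v 0) := by
      simp only [hB, hv' 0, hv' 1]
      linear_combination (l * Z * (-1) ^ ν * r ν) * hcν - (l * n * Z * (-1) ^ ν * c ν) * hrν

/- Here `r i` stands for the paper's `r_{i-1}` (so `r 0 = r_{-1} = b`, `r 1 = r_0 = a`,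
`r (ν+1) = r_ν = 0`), and the product over `i ∈ range ν` corresponds to the product over
`i = 1, …, ν`; `j ∈ range (k (i+1))` corresponds to `j = 1, …, k_i`. -/
theorem statement8_general (m : ℕ) (hm : 1 ≤ m) (l : ℤ) (a b : ℤ)
    (ν : ℕ) (r : ℕ → ℤ) (k : ℕ → ℕ)
    (hr0 : r 0 = b) (hr1 : r 1 = a) (hrν : r (ν + 1) = 0)
    (hrec : ∀ i : ℕ, 1 ≤ i → i ≤ ν → r (i - 1) = (k i : ℤ) * r i + r (i + 1))
    (z : ZMod m) :
    (∏ i ∈ Finset.range ν,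
        (∏ j ∈ Finset.range (k (i + 1)),
            omegaL m l (r (i + 1) • z) ((r i - ((j : ℤ) + 1) * r (i + 1)) • z) (r (i + 1) • z))
          ^ ((-1 : ℤ) ^ i)) =
      zetaC (m ^ 2) ^ (l * (z.val : ℤ) * (b * ((a • z).val : ℤ) - a * ((b • z).val : ℤ))) := by
  have : NeZero m := ⟨by omega⟩
  have hrec' : ∀ i < ν, r i = (k (i + 1) : ℤ) * r (i + 1) + r (i + 2) := fun i hi => by
    simpa using hrec (i + 1) (by omega) (by omega)
  have hfactor : ∀ i ∈ range ν,
      (∏ j ∈ range (k (i + 1)),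
          omegaL m l (r (i + 1) • z) ((r i - ((j : ℤ) + 1) * r (i + 1)) • z) (r (i + 1) • z))
        ^ ((-1 : ℤ) ^ i)
      = zetaC (m ^ 2) ^ (l * ((r (i + 1) • z).val : ℤ) * (((r (i + 2) • z).val : ℤ)
          - (r i • z).val + k (i + 1) * (r (i + 1) • z).val) * (-1) ^ i) := by
    intro i hi
    have hquot : r i • z - (k (i + 1) : ℤ) • r (i + 1) • z = r (i + 2) • z := by
      rw [smul_smul, ← sub_smul, hrec' i (mem_range.mp hi), add_sub_cancel_left]
    simp only [sub_smul, mul_smul]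
    rw [prod_omegaL_sub_smul, hquot, ← zpow_mul]
  rw [prod_congr rfl hfactor, prod_zpow_eq_zpow_sum₀ (zetaC_ne_zero _), ← hr0, ← hr1]
  refine zetaC_zpow_eq_zpow_of_modEq (by positivity) ?_
  rw [Nat.cast_pow]
  exact sum_alternating_modEq_sq (k := fun i => (k i : ℤ)) (fun i => ZMod.val_zsmul_modEq (r i) z)
    hrec' hrν (by simp [hrν])

theorem statement8 (m : ℕ) (hm : 1 ≤ m) (l : ℤ) (a b : ℤ) (ha : 0 < a) (hb : 0 < b)
    (ν : ℕ) (r : ℕ → ℤ) (k : ℕ → ℕ)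
    (hr0 : r 0 = b) (hr1 : r 1 = a) (hrν : r (ν + 1) = 0)
    (hrec : ∀ i : ℕ, 1 ≤ i → i ≤ ν → r (i - 1) = (k i : ℤ) * r i + r (i + 1))
    (hlt : ∀ i : ℕ, 1 ≤ i → i ≤ ν → 0 ≤ r (i + 1) ∧ r (i + 1) < r i)
    (z : ZMod m) :
    (∏ i ∈ Finset.range ν,
        (∏ j ∈ Finset.range (k (i + 1)),
            omegaL m l (r (i + 1) • z) ((r i - ((j : ℤ) + 1) * r (i + 1)) • z) (r (i + 1) • z))
          ^ ((-1 : ℤ) ^ i)) =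
      zetaC (m ^ 2) ^ (l * (z.val : ℤ) * (b * ((a • z).val : ℤ) - a * ((b • z).val : ℤ))) :=
  statement8_general m hm l a b ν r k hr0 hr1 hrν hrec z
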